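/- Let A be an N×N real symmetric Toeplitz matrix with zero diagonal and iid entries of mean 0, variance 1, and finite higher moments. For every k ≥ 1, limsup_{N→∞} N^{−(k+1)} E[Trace(A^{2k})] ≤ (2k−1)!!, i.e., the limiting 2k-th spectral moment is at most the 2k-th moment of the standard Gaussian. -/

import Mathlib

/-!
Expanding the trace, `E tr A^(2k)` is a sum over closed walks `f : Fin (2k) → Fin N` of
`E ∏ⱼ b_{|f j - f (j+1)|}`. By independence this expectation is a product of moments, one per
distinct step length: it vanishes unless every step length is nonzero and occurs at least twice,
and it is `1` when every length occurs exactly twice.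

A walk in which every length occurs exactly twice, once in each direction, is determined by the
pairing of its steps (at most `(2k-1)!!` choices), its starting point and the endpoints of the `k`
first steps of each length: at most `(2k-1)!! N^(k+1)` walks. Every other contributing walk has at
most `k - 1` free steps, either because it has fewer than `k` distinct lengths or because the
closing condition `∑ⱼ step j = 0` is a nontrivial linear relation between its `k` first steps of
each length. So these walks number `O(N^k)` and, having bounded expectations, disappear after
division by `N^(k+1)`.
-/

open Finset
open scoped Nat

section PerfectMatchings

variable {α : Type*} [DecidableEq α]

/-- Each pair `{x, y}` of a matching is stored in both orders `(x, y)` and `(y, x)`. -/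
def perfectMatchings (s : Finset α) : Finset (Finset (α × α)) :=
  (s ×ˢ s).powerset.filter fun P =>
    (∀ q ∈ P, q.1 ≠ q.2 ∧ q.swap ∈ P) ∧ ∀ x ∈ s, #{q ∈ P | q.1 = x} = 1

variable {s : Finset α} {P : Finset (α × α)}

lemma mem_perfectMatchings : P ∈ perfectMatchings s ↔
    P ⊆ s ×ˢ s ∧ (∀ q ∈ P, q.1 ≠ q.2 ∧ q.swap ∈ P) ∧ ∀ x ∈ s, #{q ∈ P | q.1 = x} = 1 := by
  rw [perfectMatchings, mem_filter, mem_powerset]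

lemma eq_of_mem_perfectMatchings (hP : P ∈ perfectMatchings s) {x y y' : α}
    (hy : (x, y) ∈ P) (hy' : (x, y') ∈ P) : y = y' := by
  have hx : x ∈ s := (mem_product.mp ((mem_perfectMatchings.mp hP).1 hy)).1
  have := card_le_one.mp ((mem_perfectMatchings.mp hP).2.2 x hx).le (x, y)
    (mem_filter.mpr ⟨hy, rfl⟩) (x, y') (mem_filter.mpr ⟨hy', rfl⟩)
  exact (Prod.mk.inj this).2

lemma fst_ne_of_mem_perfectMatchings (hP : P ∈ perfectMatchings s) {a c : α}
    (hac : (a, c) ∈ P) {q : α × α} (hq : q ∈ P) (hqac : q ≠ (a, c)) (hqca : q ≠ (c, a)) :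
    q.1 ≠ a ∧ q.1 ≠ c := by
  have hca : (c, a) ∈ P := ((mem_perfectMatchings.mp hP).2.1 _ hac).2
  constructor <;> rintro rfl
  · exact hqac (Prod.ext rfl (eq_of_mem_perfectMatchings hP hq hac))
  · exact hqca (Prod.ext rfl (eq_of_mem_perfectMatchings hP hq hca))

lemma erase_erase_mem_perfectMatchings (hP : P ∈ perfectMatchings s) {a c : α}
    (hac : (a, c) ∈ P) :
    ((P.erase (a, c)).erase (c, a)) ∈ perfectMatchings ((s.erase a).erase c) := by
  obtain ⟨hsub, hsymm, hone⟩ := mem_perfectMatchings.mp hP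
  have hoff : ∀ q ∈ (P.erase (a, c)).erase (c, a), q.1 ≠ a ∧ q.1 ≠ c ∧ q.2 ≠ a ∧ q.2 ≠ c := by
    intro q hq
    obtain ⟨hqca, hqac, hqP⟩ : q ≠ (c, a) ∧ q ≠ (a, c) ∧ q ∈ P := by simpa using hq
    have h1 := fst_ne_of_mem_perfectMatchings hP hac hqP hqac hqca
    have h2 := fst_ne_of_mem_perfectMatchings hP hac (hsymm q hqP).2
      (fun h => hqca (by rw [← Prod.swap_swap q, h]; rfl))
      (fun h => hqac (by rw [← Prod.swap_swap q, h]; rfl))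
    exact ⟨h1.1, h1.2, h2.1, h2.2⟩
  refine mem_perfectMatchings.mpr ⟨fun q hq => ?_, fun q hq => ?_, fun x hx => ?_⟩
  · have hqs := mem_product.mp (hsub (mem_of_mem_erase (mem_of_mem_erase hq)))
    have := hoff q hq
    simp only [mem_product, mem_erase]
    exact ⟨⟨this.2.1, this.1, hqs.1⟩, this.2.2.2, this.2.2.1, hqs.2⟩
  · obtain ⟨hqca, hqac, hqP⟩ : q ≠ (c, a) ∧ q ≠ (a, c) ∧ q ∈ P := by simpa using hq
    refine ⟨(hsymm q hqP).1, ?_⟩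
    simp only [mem_erase]
    refine ⟨fun h => hqac ?_, fun h => hqca ?_, (hsymm q hqP).2⟩ <;>
      rw [← Prod.swap_swap q, h] <;> rfl
  · obtain ⟨hxc, hxa, hxs⟩ : x ≠ c ∧ x ≠ a ∧ x ∈ s := by simpa using hx
    rw [← hone x hxs, filter_erase, filter_erase, erase_eq_of_notMem, erase_eq_of_notMem]
    · simp [Ne.symm hxa]
    · simp [Ne.symm hxc]

theorem card_perfectMatchings_le (s : Finset α) : #(perfectMatchings s) ≤ (#s - 1)‼ := by
  induction hm : #s using Nat.strong_induction_on generalizing s with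
  | _ m ih =>
  rcases s.eq_empty_or_nonempty with rfl | ⟨a, ha⟩
  · subst hm
    calc #(perfectMatchings (∅ : Finset α)) ≤ #(((∅ : Finset α) ×ˢ (∅ : Finset α)).powerset) :=
          card_filter_le _ _
      _ = (0 - 1)‼ := by simp
  have hsub : perfectMatchings s ⊆ (s.erase a).biUnion fun c =>
      (perfectMatchings ((s.erase a).erase c)).image fun P => insert (a, c) (insert (c, a) P) := by
    intro P hP
    obtain ⟨hsub, hsymm, hone⟩ := mem_perfectMatchings.mp hP
    obtain ⟨⟨a', c⟩, hq⟩ := card_pos.mp ((hone a ha).symm ▸ one_pos)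
    obtain ⟨hacP, rfl⟩ : (a', c) ∈ P ∧ a' = a := mem_filter.mp hq
    have hca : (c, a') ∈ P := (hsymm _ hacP).2
    have hc : c ∈ s.erase a' :=
      mem_erase.mpr ⟨((hsymm _ hacP).1).symm, (mem_product.mp (hsub hacP)).2⟩
    refine mem_biUnion.mpr ⟨c, hc, mem_image.mpr ⟨_, erase_erase_mem_perfectMatchings hP hacP, ?_⟩⟩
    rw [insert_erase (mem_erase.mpr ⟨fun h => (hsymm _ hacP).1 (Prod.mk.inj h).1.symm, hca⟩),
      insert_erase hacP]
  have hcard : ∀ c ∈ s.erase a, #((s.erase a).erase c) = m - 2 := fun c hc => by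
    rw [card_erase_of_mem hc, card_erase_of_mem ha, hm]; omega
  calc #(perfectMatchings s)
      ≤ ∑ c ∈ s.erase a, #((perfectMatchings ((s.erase a).erase c)).image
          fun P => insert (a, c) (insert (c, a) P)) := (card_le_card hsub).trans card_biUnion_le
    _ ≤ ∑ c ∈ s.erase a, (m - 2 - 1)‼ := sum_le_sum fun c hc =>
          card_image_le.trans (ih _ (by have := card_pos.mpr ⟨a, ha⟩; omega) _ (hcard c hc))
    _ = (m - 1) * (m - 2 - 1)‼ := by rw [sum_const, card_erase_of_mem ha, hm, smul_eq_mul]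
    _ ≤ (m - 1)‼ := by
      rcases m with _ | _ | _ | m <;> simp

end PerfectMatchings

section WalkExpansion

variable {ι R : Type*} [Fintype ι] [DecidableEq ι] [CommSemiring R]

/-- `g` lists the intermediate vertices; step `t` of the path goes from `Fin.cons i g t` to
`Fin.snoc g j t`. -/
lemma Matrix.pow_succ_apply_eq_sum (A : Matrix ι ι R) (m : ℕ) (i j : ι) :
    (A ^ (m + 1)) i j = ∑ g : Fin m → ι, ∏ t : Fin (m + 1),
      A (Fin.cons (α := fun _ => ι) i g t) (Fin.snoc (α := fun _ => ι) g j t) := by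
  induction m generalizing i with
  | zero => simp [Fin.snoc]
  | succ m ih =>
    rw [pow_succ', Matrix.mul_apply]
    simp_rw [ih, Finset.mul_sum]
    rw [← Fintype.sum_prod_type']
    refine Fintype.sum_equiv (Fin.consEquiv fun _ => ι) _ _ fun ⟨x, g⟩ => ?_
    change _ = ∏ t, A (Fin.cons (α := fun _ => ι) i (Fin.cons (α := fun _ => ι) x g) t)
      (Fin.snoc (α := fun _ => ι) (Fin.cons (α := fun _ => ι) x g) j t)
    rw [← Fin.cons_snoc_eq_snoc_cons, Fin.prod_univ_succ (n := m + 1)]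
    simp only [Fin.cons_zero, Fin.cons_succ]

lemma Matrix.trace_pow_eq_sum (A : Matrix ι ι R) (n : ℕ) [NeZero n] :
    (A ^ n).trace = ∑ f : Fin n → ι, ∏ t, A (f t) (f (t + 1)) := by
  obtain ⟨m, rfl⟩ := Nat.exists_eq_succ_of_ne_zero (NeZero.ne n)
  simp_rw [Matrix.trace, Matrix.diag, Matrix.pow_succ_apply_eq_sum]
  rw [← Fintype.sum_prod_type']
  refine Fintype.sum_equiv (Fin.consEquiv fun _ => ι) _ _ fun ⟨i, g⟩ => ?_
  refine prod_congr rfl fun t _ => congrArg _ ?_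
  simp only [Fin.consEquiv_apply]
  induction t using Fin.lastCases with
  | last => simp
  | cast s => simp [Fin.coeSucc_eq_succ]

end WalkExpansion

lemma Fin.funext_of_succ {n : ℕ} [NeZero n] {α : Type*} {f g : Fin n → α} (h0 : f 0 = g 0)
    (hsucc : ∀ j, (∀ i ≤ j, f i = g i) → f (j + 1) = g (j + 1)) : f = g := by
  obtain ⟨m, rfl⟩ := Nat.exists_eq_succ_of_ne_zero (NeZero.ne n)
  funext j
  induction j using WellFoundedLT.induction with
  | _ j ih =>
  cases j using Fin.cases with
  | zero => exact h0
  | succ i =>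
    rw [← Fin.coeSucc_eq_succ]
    exact hsucc _ fun i' hi' => ih i' (hi'.trans_lt Fin.castSucc_lt_succ)

section ListValues

variable {ι β : Type*}

/-- Records a function on a finset `K` with `#K ≤ m` as an `m`-tuple (padded with `b`), so that
functions on varying finsets can be encoded in one fixed type. -/
noncomputable def Finset.listValues (K : Finset ι) (m : ℕ) (x : ι → β) (b : β) : Fin m → β :=
  fun t => if h : (t : ℕ) < #K then x (K.equivFin.symm ⟨t, h⟩) else b

lemma Finset.eqOn_of_listValues_eq {K : Finset ι} {m : ℕ} (hK : #K ≤ m) {x y : ι → β} {b b' : β}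
    (h : K.listValues m x b = K.listValues m y b') : ∀ j ∈ K, x j = y j := by
  intro j hj
  have ht : ((K.equivFin ⟨j, hj⟩ : Fin #K) : ℕ) < m := (Fin.isLt _).trans_le hK
  simpa [listValues] using congrFun h ⟨_, ht⟩

end ListValues

/-!
A closed walk of length `n` on `Fin N` is a map `f : Fin n → Fin N`; its step `j` goes from `f j`
to `f (j + 1)`, indices taken mod `n`, and corresponds to the Toeplitz entry
`b (stepLength f j)`. The leader of a step is the first step of the same length, so the leaders
list the distinct step lengths.
-/
namespace CyclicWalk

variable {n N : ℕ} [NeZero n]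

def step (f : Fin n → Fin N) (j : Fin n) : ℤ := ((f (j + 1) : ℕ) : ℤ) - ((f j : ℕ) : ℤ)

def stepLength (f : Fin n → Fin N) (j : Fin n) : ℕ := Nat.dist (f j) (f (j + 1))

def lengthMult (f : Fin n → Fin N) (d : ℕ) : ℕ := #{j | stepLength f j = d}

def leader (f : Fin n → Fin N) (j : Fin n) : Fin n :=
  ({i | stepLength f i = stepLength f j} : Finset (Fin n)).min' ⟨j, by simp⟩

def leaders (f : Fin n → Fin N) : Finset (Fin n) := {j | leader f j = j}

def stepSign (f : Fin n → Fin N) (j : Fin n) : ℤ :=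
  if step f j = step f (leader f j) then 1 else -1

def signedMult (f : Fin n → Fin N) (i : Fin n) : ℤ := ∑ j with leader f j = i, stepSign f j

def IsRepeating (f : Fin n → Fin N) : Prop :=
  ∀ j, stepLength f j ≠ 0 ∧ 2 ≤ lengthMult f (stepLength f j)

def IsPairing (f : Fin n → Fin N) : Prop :=
  ∀ j, stepLength f j ≠ 0 ∧ lengthMult f (stepLength f j) = 2

/-- Every step length is traversed equally often in both directions. -/
def IsBalanced (f : Fin n → Fin N) : Prop := ∀ i, signedMult f i = 0

instance : DecidablePred (IsRepeating (n := n) (N := N)) := fun f => by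
  unfold IsRepeating; infer_instance

instance : DecidablePred (IsPairing (n := n) (N := N)) := fun f => by
  unfold IsPairing; infer_instance

instance : DecidablePred (IsBalanced (n := n) (N := N)) := fun f => by
  unfold IsBalanced; infer_instance

variable {f g : Fin n → Fin N}

lemma natAbs_step (f : Fin n → Fin N) (j : Fin n) : (step f j).natAbs = stepLength f j := by
  unfold step stepLength Nat.dist; omega

lemma sum_step (f : Fin n → Fin N) : ∑ j, step f j = 0 := by
  simp only [step, sum_sub_distrib, sub_eq_zero]
  exact Fintype.sum_equiv (Equiv.addRight 1) _ _ fun _ => rfl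

lemma stepLength_leader (f : Fin n → Fin N) (j : Fin n) :
    stepLength f (leader f j) = stepLength f j :=
  (mem_filter.mp (min'_mem ({i | stepLength f i = stepLength f j} : Finset (Fin n)) _)).2

lemma leader_le {i j : Fin n} (h : stepLength f i = stepLength f j) : leader f j ≤ i :=
  min'_le _ _ (by simpa using h)

lemma leader_eq_leader_iff {i j : Fin n} :
    leader f i = leader f j ↔ stepLength f i = stepLength f j := by
  refine ⟨fun h => ?_, fun h => by simp only [leader, h]⟩
  rw [← stepLength_leader f i, h, stepLength_leader]

lemma leader_leader (f : Fin n → Fin N) (j : Fin n) : leader f (leader f j) = leader f j :=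
  leader_eq_leader_iff.mpr (stepLength_leader f j)

lemma leader_mem_leaders (f : Fin n → Fin N) (j : Fin n) : leader f j ∈ leaders f := by
  simp [leaders, leader_leader]

lemma card_leaders (f : Fin n → Fin N) : #(leaders f) = #(univ.image (stepLength f)) := by
  refine card_nbij (stepLength f) (fun j _ => mem_image_of_mem _ (mem_univ j)) ?_ ?_
  · intro i hi j hj h
    rw [← (mem_filter.mp (mem_coe.mp hi)).2, ← (mem_filter.mp (mem_coe.mp hj)).2,
      leader_eq_leader_iff.mpr h]
  · rintro d hd
    obtain ⟨j, -, rfl⟩ := mem_image.mp hd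
    exact ⟨leader f j, leader_mem_leaders f j, stepLength_leader f j⟩

lemma sum_lengthMult (f : Fin n → Fin N) :
    ∑ d ∈ univ.image (stepLength f), lengthMult f d = n := by
  simpa [lengthMult] using (card_eq_sum_card_image (stepLength f) univ).symm

lemma two_mul_card_leaders_eq_sum (f : Fin n → Fin N) :
    2 * #(leaders f) = ∑ _d ∈ univ.image (stepLength f), 2 := by
  rw [card_leaders, sum_const, smul_eq_mul, mul_comm]

lemma IsRepeating.two_mul_card_leaders_le (hf : IsRepeating f) : 2 * #(leaders f) ≤ n := by
  rw [two_mul_card_leaders_eq_sum]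
  refine (sum_le_sum fun d hd => ?_).trans_eq (sum_lengthMult f)
  obtain ⟨j, -, rfl⟩ := mem_image.mp hd
  exact (hf j).2

lemma IsRepeating.isPairing (hf : IsRepeating f) (h : n ≤ 2 * #(leaders f)) : IsPairing f := by
  have hle : ∀ d ∈ univ.image (stepLength f), 2 ≤ lengthMult f d := by
    rintro d hd
    obtain ⟨j, -, rfl⟩ := mem_image.mp hd
    exact (hf j).2
  have hsum : ∑ _d ∈ univ.image (stepLength f), 2 =
      ∑ d ∈ univ.image (stepLength f), lengthMult f d := by
    have := hf.two_mul_card_leaders_le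
    rw [sum_lengthMult, ← two_mul_card_leaders_eq_sum]
    omega
  exact fun j => ⟨(hf j).1,
    ((sum_eq_sum_iff_of_le hle).mp hsum _ (mem_image_of_mem _ (mem_univ j))).symm⟩

lemma IsPairing.two_mul_card_leaders (hf : IsPairing f) : 2 * #(leaders f) = n := by
  rw [two_mul_card_leaders_eq_sum]
  refine (sum_congr rfl fun d hd => ?_).trans (sum_lengthMult f)
  obtain ⟨j, -, rfl⟩ := mem_image.mp hd
  exact (hf j).2.symm

lemma abs_prod_le_pow {M : ℝ} {c : ℕ → ℝ} (hM1 : 1 ≤ M) (hM : ∀ m ≤ n, |c m| ≤ M)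
    (f : Fin n → Fin N) : |∏ d ∈ univ.image (stepLength f), c (lengthMult f d)| ≤ M ^ n := by
  calc |∏ d ∈ univ.image (stepLength f), c (lengthMult f d)|
      = ∏ d ∈ univ.image (stepLength f), |c (lengthMult f d)| := abs_prod _ _
    _ ≤ ∏ _d ∈ univ.image (stepLength f), M :=
        prod_le_prod (fun _ _ => abs_nonneg _) fun d _ =>
          hM _ ((card_filter_le _ _).trans (by simp))
    _ ≤ M ^ n := by
        rw [prod_const]
        exact pow_le_pow_right₀ hM1 (card_image_le.trans (by simp))

lemma step_eq_stepSign_mul (f : Fin n → Fin N) (j : Fin n) :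
    step f j = stepSign f j * step f (leader f j) := by
  have h : (step f j).natAbs = (step f (leader f j)).natAbs := by
    rw [natAbs_step, natAbs_step, stepLength_leader]
  unfold stepSign
  split_ifs with hs
  · rw [hs, one_mul]
  · omega

lemma sum_signedMult_mul_step (f : Fin n → Fin N) : ∑ i, signedMult f i * step f i = 0 := by
  calc ∑ i, signedMult f i * step f i
      = ∑ i, ∑ j with leader f j = i, stepSign f j * step f (leader f j) := by
        refine sum_congr rfl fun i _ => ?_
        rw [signedMult, sum_mul]
        exact sum_congr rfl fun j hj => by rw [(mem_filter.mp hj).2]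
    _ = ∑ j, step f j := by
        rw [sum_fiberwise]
        exact sum_congr rfl fun j _ => (step_eq_stepSign_mul f j).symm
    _ = 0 := sum_step f

lemma mem_leaders_of_signedMult_ne_zero {i : Fin n} (h : signedMult f i ≠ 0) : i ∈ leaders f := by
  obtain ⟨j, hj, -⟩ := exists_ne_zero_of_sum_ne_zero h
  rw [← (mem_filter.mp hj).2]
  exact leader_mem_leaders f j

lemma IsPairing.filter_leader_eq (hf : IsPairing f) {j : Fin n} (hj : j ∉ leaders f) :
    ({i | leader f i = leader f j} : Finset (Fin n)) = {leader f j, j} := by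
  have hne : leader f j ≠ j := by simpa [leaders] using hj
  refine (eq_of_subset_of_card_le (fun i hi => ?_) ?_).symm
  · rcases mem_insert.mp hi with rfl | hi
    · simp [leader_leader]
    · simp [mem_singleton.mp hi]
  · rw [card_pair hne]
    simp_rw [leader_eq_leader_iff]
    exact (hf j).2.le

lemma IsPairing.step_eq_neg (hf : IsPairing f) (hb : IsBalanced f) {j : Fin n}
    (hj : j ∉ leaders f) : step f j = -step f (leader f j) := by
  have hne : leader f j ≠ j := by simpa [leaders] using hj
  have h0 := hb (leader f j)
  rw [signedMult, hf.filter_leader_eq hj, sum_pair hne, stepSign, if_pos (by rw [leader_leader])]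
    at h0
  rw [step_eq_stepSign_mul f j, show stepSign f j = -1 by omega, neg_one_mul]

lemma eq_of_step_eq (h0 : f 0 = g 0) (h : ∀ j, step f j = step g j) : f = g :=
  Fin.funext_of_succ h0 fun j hj => Fin.ext <| by
    have := h j
    have := congrArg Fin.val (hj j le_rfl)
    unfold step at *
    omega

lemma signedMult_congr (hl : leader f = leader g) (hs : stepSign f = stepSign g) :
    signedMult f = signedMult g := by
  funext i
  simp only [signedMult, hl, hs]

lemma leaders_congr (hl : leader f = leader g) : leaders f = leaders g := by
  simp only [leaders, hl]

/-- If some `signedMult f i` is nonzero, the closing relation `sum_signedMult_mul_step` expresses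
the step at such an `i` through the other leader steps, so only the `freeLeaders` steps are needed
to rebuild the walk. -/
noncomputable def pivot (f : Fin n → Fin N) : Fin n :=
  if h : ∃ i, signedMult f i ≠ 0 then h.choose else 0

noncomputable def freeLeaders (f : Fin n → Fin N) : Finset (Fin n) :=
  if signedMult f (pivot f) = 0 then leaders f else (leaders f).erase (pivot f)

lemma freeLeaders_congr (hl : leader f = leader g) (hs : stepSign f = stepSign g) :
    freeLeaders f = freeLeaders g := by
  unfold freeLeaders pivot
  rw [signedMult_congr hl hs, leaders_congr hl]

lemma isBalanced_of_signedMult_pivot (h : signedMult f (pivot f) = 0) : IsBalanced f := by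
  intro i
  by_contra hi
  have hex : ∃ i, signedMult f i ≠ 0 := ⟨i, hi⟩
  rw [pivot, dif_pos hex] at h
  exact hex.choose_spec h

lemma card_freeLeaders_le {k : ℕ} (hn : n = 2 * k) (hf : IsRepeating f)
    (hmain : ¬(IsPairing f ∧ IsBalanced f)) : #(freeLeaders f) ≤ k - 1 := by
  have hle := hf.two_mul_card_leaders_le
  unfold freeLeaders
  split_ifs with hp
  · have : ¬n ≤ 2 * #(leaders f) := fun h =>
      hmain ⟨hf.isPairing h, isBalanced_of_signedMult_pivot hp⟩
    omega
  · rw [card_erase_of_mem (mem_leaders_of_signedMult_ne_zero hp)]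
    omega

lemma step_eq_of_eqOn_freeLeaders (hl : leader f = leader g) (hs : stepSign f = stepSign g)
    (hfree : ∀ j ∈ freeLeaders f, step f j = step g j) (j : Fin n) : step f j = step g j := by
  have hlead : ∀ i ∈ leaders f, step f i = step g i := by
    by_cases hp : signedMult f (pivot f) = 0
    · simpa [freeLeaders, hp] using hfree
    have hrest : ∀ i ∈ leaders f, i ≠ pivot f → step f i = step g i := fun i hi hip =>
      hfree i (by simp [freeLeaders, hp, hi, hip])
    intro i hi
    rcases eq_or_ne i (pivot f) with rfl | hip
    · have ef := sum_signedMult_mul_step f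
      have eg := sum_signedMult_mul_step g
      rw [← signedMult_congr hl hs] at eg
      rw [← add_sum_erase _ _ (mem_univ (pivot f))] at ef eg
      have hsum : ∑ i' ∈ univ.erase (pivot f), signedMult f i' * step f i' =
          ∑ i' ∈ univ.erase (pivot f), signedMult f i' * step g i' := by
        refine sum_congr rfl fun i' hi' => ?_
        by_cases hc : signedMult f i' = 0
        · simp [hc]
        · rw [hrest i' (mem_leaders_of_signedMult_ne_zero hc) (ne_of_mem_erase hi')]
      exact mul_left_cancel₀ hp (by linarith)
    · exact hrest i hi hip
  rw [step_eq_stepSign_mul f j, step_eq_stepSign_mul g j, hs, ← hl,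
    hlead _ (leader_mem_leaders f j)]

theorem card_repeating_not_balanced_pairing_le {k : ℕ} (hn : n = 2 * k) :
    #{f : Fin n → Fin N | IsRepeating f ∧ ¬(IsPairing f ∧ IsBalanced f)} ≤
      n ^ n * 2 ^ n * (N * (2 * N + 1) ^ (k - 1)) := by
  let code (f : Fin n → Fin N) :=
    (leader f, stepSign f, f 0, (freeLeaders f).listValues (k - 1) (step f) 0)
  have hmaps : ∀ f ∈ ({f | IsRepeating f ∧ ¬(IsPairing f ∧ IsBalanced f)} : Finset _),
      code f ∈ (univ ×ˢ Fintype.piFinset (fun _ => {1, -1}) ×ˢ univ ×ˢ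
        Fintype.piFinset (fun _ => Icc (-(N : ℤ)) N)) := by
    intro f _
    simp only [code, mem_product, mem_univ, Fintype.mem_piFinset, true_and]
    refine ⟨fun j => by unfold stepSign; split_ifs <;> simp, fun t => ?_⟩
    unfold Finset.listValues step
    split_ifs
    · simp only [mem_Icc]; omega
    · simp
  refine (card_le_card_of_injOn code hmaps fun f hf g hg hfg => ?_).trans ?_
  · simp only [coe_filter, mem_univ, true_and, Set.mem_ofPred_eq] at hf
    obtain ⟨hl, hs, h0, hv⟩ := by simpa [code] using hfg
    refine eq_of_step_eq h0 (step_eq_of_eqOn_freeLeaders hl hs fun j hj => ?_)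
    exact eqOn_of_listValues_eq (card_freeLeaders_le hn hf.1 hf.2)
      (hv.trans (by rw [freeLeaders_congr hl hs])) j hj
  · have hIcc : ((N : ℤ) + 1 + N).toNat = 2 * N + 1 := by omega
    simp [card_product, Fintype.card_piFinset, hIcc, mul_assoc]

def pairsOf (f : Fin n → Fin N) : Finset (Fin n × Fin n) :=
  {p | p.1 ≠ p.2 ∧ stepLength f p.1 = stepLength f p.2}

lemma IsPairing.pairsOf_mem (hf : IsPairing f) : pairsOf f ∈ perfectMatchings univ := by
  refine mem_perfectMatchings.mpr ⟨fun _ _ => mem_product.mpr ⟨mem_univ _, mem_univ _⟩,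
    fun q hq => ?_, fun x _ => ?_⟩
  · simp only [pairsOf, mem_filter, mem_univ, true_and, Prod.fst_swap, Prod.snd_swap] at hq ⊢
    exact ⟨hq.1, hq.1.symm, hq.2.symm⟩
  · have : ({q ∈ pairsOf f | q.1 = x} : Finset _) =
        (({i | stepLength f i = stepLength f x} : Finset _).erase x).image (Prod.mk x) := by
      ext ⟨a, c⟩
      simp only [pairsOf, mem_filter, mem_univ, true_and, mem_image, mem_erase, Prod.mk.injEq]
      constructor
      · rintro ⟨⟨hac, hl⟩, rfl⟩
        exact ⟨c, ⟨Ne.symm hac, hl.symm⟩, rfl, rfl⟩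
      · rintro ⟨c, ⟨hcx, hl⟩, rfl, rfl⟩
        exact ⟨⟨Ne.symm hcx, hl.symm⟩, rfl⟩
    rw [this, card_image_of_injective _ (Prod.mk_right_injective x), card_erase_of_mem (by simp)]
    exact congrArg (· - 1) (hf x).2

lemma leader_eq_of_pairsOf_eq (h : pairsOf f = pairsOf g) : leader f = leader g := by
  have hker : ∀ i j, stepLength f i = stepLength f j ↔ stepLength g i = stepLength g j := by
    intro i j
    rcases eq_or_ne i j with rfl | hij
    · simp
    simpa [pairsOf, hij] using congrArg ((i, j) ∈ ·) h
  funext j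
  simp only [leader, hker]

lemma eq_of_eqOn_leaders_succ (hf : IsPairing f ∧ IsBalanced f) (hg : IsPairing g ∧ IsBalanced g)
    (hl : leader f = leader g) (h0 : f 0 = g 0)
    (hv : ∀ j ∈ leaders f, f (j + 1) = g (j + 1)) : f = g := by
  refine Fin.funext_of_succ h0 fun j hj => ?_
  by_cases hjl : j ∈ leaders f
  · exact hv j hjl
  have ef := hf.1.step_eq_neg hf.2 hjl
  have eg := hg.1.step_eq_neg hg.2 (by rwa [← leaders_congr hl])
  rw [← hl] at eg
  have e1 := congrArg Fin.val (hv _ (leader_mem_leaders f j))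
  have e2 := congrArg Fin.val (hj _ (leader_le (f := f) rfl))
  have e3 := congrArg Fin.val (hj j le_rfl)
  unfold step at ef eg
  exact Fin.ext (by omega)

theorem card_balanced_pairing_le {k : ℕ} (hn : n = 2 * k) :
    #{f : Fin n → Fin N | IsPairing f ∧ IsBalanced f} ≤ (n - 1)‼ * (N * N ^ k) := by
  let code (f : Fin n → Fin N) :=
    (pairsOf f, f 0, (leaders f).listValues k (fun j => f (j + 1)) (f 0))
  have hmaps : ∀ f ∈ ({f | IsPairing f ∧ IsBalanced f} : Finset (Fin n → Fin N)),
      code f ∈ perfectMatchings univ ×ˢ univ ×ˢ univ := fun f hf =>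
    mem_product.mpr ⟨(mem_filter.mp hf).2.1.pairsOf_mem, mem_product.mpr ⟨mem_univ _, mem_univ _⟩⟩
  refine (card_le_card_of_injOn code hmaps fun f hf g hg hfg => ?_).trans ?_
  · simp only [coe_filter, mem_univ, true_and, Set.mem_ofPred_eq] at hf hg
    obtain ⟨hp, h0, hv⟩ := by simpa [code] using hfg
    have hl := leader_eq_of_pairsOf_eq hp
    have hk : #(leaders f) ≤ k := by have := hf.1.two_mul_card_leaders; omega
    exact eq_of_eqOn_leaders_succ hf hg hl h0
      (eqOn_of_listValues_eq hk (hv.trans (by rw [leaders_congr hl])))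
  · have := card_perfectMatchings_le (univ : Finset (Fin n))
    simp only [card_univ, Fintype.card_fin] at this
    simpa [card_product] using Nat.mul_le_mul_right _ this

end CyclicWalk

section IndependentProducts

open MeasureTheory ProbabilityTheory

variable {Ω κ : Type*} [MeasurableSpace Ω] {μ : Measure Ω} {X : κ → Ω → ℝ}

lemma ProbabilityTheory.iIndepFun.integrable_finset_prod [IsProbabilityMeasure μ]
    (hX : iIndepFun X μ)
    (hmeas : ∀ i, Measurable (X i)) (hint : ∀ i, Integrable (X i) μ) (t : Finset κ) :
    Integrable (fun ω => ∏ i ∈ t, X i ω) μ := by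
  classical
  induction t using Finset.induction_on with
  | empty => simp
  | insert i t hi ih =>
    have := (hX.indepFun_finsetProd_of_notMem hmeas hi).integrable_mul
      (by simpa [Finset.prod_fn] using ih) (hint i)
    convert this using 1
    ext ω
    simp [prod_insert hi, mul_comm]

lemma ProbabilityTheory.iIndepFun.integral_finset_prod (hX : iIndepFun X μ)
    (hmeas : ∀ i, Measurable (X i)) (t : Finset κ) :
    ∫ ω, ∏ i ∈ t, X i ω ∂μ = ∏ i ∈ t, ∫ ω, X i ω ∂μ := by
  simp_rw [← prod_coe_sort t]
  exact (hX.restrict t).integral_fun_prod_eq_prod_integral fun i => (hmeas i).aestronglyMeasurable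

lemma ProbabilityTheory.iIndepFun.integrable_prod_comp [IsProbabilityMeasure μ] {ι : Type*}
    [Fintype ι] [DecidableEq κ] (hX : iIndepFun X μ) (hmeas : ∀ i, Measurable (X i))
    (hint : ∀ i (q : ℕ), Integrable (fun ω => X i ω ^ q) μ) (d : ι → κ) :
    Integrable (fun ω => ∏ j, X (d j) ω) μ := by
  have h ω : ∏ j, X (d j) ω = ∏ e ∈ univ.image d, X e ω ^ #{j | d j = e} :=
    prod_comp (fun e => X e ω) d
  simp_rw [h]
  exact (hX.comp _ fun _ => measurable_id.pow_const _).integrable_finset_prod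
    (fun e => (hmeas e).pow_const _) (fun e => hint e _) _

lemma ProbabilityTheory.iIndepFun.integral_prod_comp_eq_prod_pow {ι : Type*} [Fintype ι]
    [DecidableEq κ] (hX : iIndepFun X μ) (hmeas : ∀ i, Measurable (X i)) (d : ι → κ) :
    ∫ ω, ∏ j, X (d j) ω ∂μ = ∏ e ∈ univ.image d, ∫ ω, X e ω ^ #{j | d j = e} ∂μ := by
  have h ω : ∏ j, X (d j) ω = ∏ e ∈ univ.image d, X e ω ^ #{j | d j = e} :=
    prod_comp (fun e => X e ω) d
  simp_rw [h]
  exact (hX.comp (fun e x => x ^ #{j | d j = e}) fun _ => measurable_id.pow_const _)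
    |>.integral_finset_prod (fun e => (hmeas e).pow_const _) _

end IndependentProducts

namespace CyclicWalk

lemma prod_eq_zero_of_stepLength_eq_zero {n N : ℕ} [NeZero n] {Ω : Type*} {b : ℕ → Ω → ℝ}
    (hzero : b 0 = 0) {f : Fin n → Fin N} {j : Fin n} (hj : stepLength f j = 0) :
    (fun ω => ∏ j, b (stepLength f j) ω) = fun _ => 0 :=
  funext fun ω => prod_eq_zero (mem_univ j) (by rw [hj, hzero]; rfl)

lemma prod_stepLength_eq_prod_sub_one_add_one {n N : ℕ} [NeZero n] {Ω : Type*}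
    {b : ℕ → Ω → ℝ} {f : Fin n → Fin N} (hf : ∀ j, stepLength f j ≠ 0) :
    (fun ω => ∏ j, b (stepLength f j) ω) = fun ω => ∏ j, b (stepLength f j - 1 + 1) ω :=
  funext fun ω => prod_congr rfl fun j _ => by rw [Nat.sub_add_cancel (Nat.pos_of_ne_zero (hf j))]

open MeasureTheory ProbabilityTheory

variable {n N : ℕ} [NeZero n] {Ω : Type*} [MeasurableSpace Ω] {μ : Measure Ω}
  {b : ℕ → Ω → ℝ} {f : Fin n → Fin N}

lemma integrable_prod [IsProbabilityMeasure μ] (hmeas : ∀ i, Measurable (b i))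
    (hzero : b 0 = 0) (hindep : iIndepFun (fun i => b (i + 1)) μ)
    (hintq : ∀ i q : ℕ, Integrable (fun ω => (b (i + 1) ω) ^ q) μ) (f : Fin n → Fin N) :
    Integrable (fun ω => ∏ j, b (stepLength f j) ω) μ := by
  by_cases hz : ∃ j, stepLength f j = 0
  · obtain ⟨j, hj⟩ := hz
    rw [prod_eq_zero_of_stepLength_eq_zero hzero hj]
    exact integrable_zero _ _ _
  push Not at hz
  rw [prod_stepLength_eq_prod_sub_one_add_one hz]
  exact hindep.integrable_prod_comp (fun i => hmeas (i + 1)) hintq _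

lemma integral_prod_eq_prod_moment (hmeas : ∀ i, Measurable (b i))
    (hindep : iIndepFun (fun i => b (i + 1)) μ)
    (hid : ∀ i j, IdentDistrib (b (i + 1)) (b (j + 1)) μ μ) (hf : ∀ j, stepLength f j ≠ 0) :
    ∫ ω, ∏ j, b (stepLength f j) ω ∂μ =
      ∏ d ∈ univ.image (stepLength f), ∫ ω, b 1 ω ^ lengthMult f d ∂μ := by
  have himage : univ.image (fun j => stepLength f j - 1) =
      (univ.image (stepLength f)).image (· - 1) := by
    rw [image_image]; rfl
  rw [prod_stepLength_eq_prod_sub_one_add_one hf,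
    hindep.integral_prod_comp_eq_prod_pow (fun i => hmeas (i + 1)), himage, prod_image]
  · refine prod_congr rfl fun d hd => ?_
    obtain ⟨j, -, rfl⟩ := mem_image.mp hd
    have hfib : #{j' | stepLength f j' - 1 = stepLength f j - 1} =
        lengthMult f (stepLength f j) := by
      refine congrArg card (filter_congr fun j' _ => ?_)
      have := hf j; have := hf j'
      omega
    rw [hfib]
    exact ((hid _ 0).comp (measurable_id.pow_const _)).integral_eq
  · intro d hd d' hd' h
    obtain ⟨j, -, rfl⟩ := mem_image.mp hd
    obtain ⟨j', -, rfl⟩ := mem_image.mp hd'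
    have := hf j; have := hf j'
    simp only at h
    omega

lemma integral_prod_le (hmeas : ∀ i, Measurable (b i)) (hzero : b 0 = 0)
    (hindep : iIndepFun (fun i => b (i + 1)) μ)
    (hid : ∀ i j, IdentDistrib (b (i + 1)) (b (j + 1)) μ μ)
    (hmean : ∀ i, ∫ ω, b (i + 1) ω ∂μ = 0) (hvar : ∀ i, ∫ ω, (b (i + 1) ω) ^ 2 ∂μ = 1)
    {M : ℝ} (hM1 : 1 ≤ M) (hM : ∀ m ≤ n, |∫ ω, b 1 ω ^ m ∂μ| ≤ M) (f : Fin n → Fin N) :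
    ∫ ω, ∏ j, b (stepLength f j) ω ∂μ ≤
      (if IsPairing f ∧ IsBalanced f then 1 else 0) +
        (if IsRepeating f ∧ ¬(IsPairing f ∧ IsBalanced f) then M ^ n else 0) := by
  have hrhs : 0 ≤ (if IsPairing f ∧ IsBalanced f then (1 : ℝ) else 0) +
      (if IsRepeating f ∧ ¬(IsPairing f ∧ IsBalanced f) then M ^ n else 0) := by
    have : 0 ≤ M ^ n := pow_nonneg (by linarith) n
    split_ifs <;> linarith
  by_cases hz : ∃ j, stepLength f j = 0
  · obtain ⟨j, hj⟩ := hz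
    rwa [prod_eq_zero_of_stepLength_eq_zero hzero hj, integral_zero]
  push Not at hz
  rw [integral_prod_eq_prod_moment hmeas hindep hid hz]
  by_cases hrep : IsRepeating f
  · by_cases hmain : IsPairing f ∧ IsBalanced f
    · rw [if_pos hmain, if_neg fun h => h.2 hmain, add_zero]
      refine (prod_eq_one fun d hd => ?_).le
      obtain ⟨j, -, rfl⟩ := mem_image.mp hd
      simpa [(hmain.1 j).2] using hvar 0
    rw [if_neg hmain, if_pos ⟨hrep, hmain⟩, zero_add]
    exact (le_abs_self _).trans (abs_prod_le_pow hM1 hM f)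
  · obtain ⟨j, hj⟩ : ∃ j, lengthMult f (stepLength f j) = 1 := by
      simp only [IsRepeating, not_forall] at hrep
      obtain ⟨j, hj⟩ := hrep
      have : 1 ≤ lengthMult f (stepLength f j) := card_pos.mpr ⟨j, by simp⟩
      exact ⟨j, by have := hz j; omega⟩
    rw [prod_eq_zero (mem_image_of_mem _ (mem_univ j)) (by simpa [hj] using hmean 0)]
    exact hrhs

lemma integral_trace_pow_le [IsProbabilityMeasure μ] (hmeas : ∀ i, Measurable (b i))
    (hzero : b 0 = 0) (hindep : iIndepFun (fun i => b (i + 1)) μ)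
    (hid : ∀ i j, IdentDistrib (b (i + 1)) (b (j + 1)) μ μ)
    (hmean : ∀ i, ∫ ω, b (i + 1) ω ∂μ = 0) (hvar : ∀ i, ∫ ω, (b (i + 1) ω) ^ 2 ∂μ = 1)
    (hintq : ∀ i q : ℕ, Integrable (fun ω => (b (i + 1) ω) ^ q) μ)
    {M : ℝ} (hM1 : 1 ≤ M) (hM : ∀ m ≤ n, |∫ ω, b 1 ω ^ m ∂μ| ≤ M) (N : ℕ) :
    ∫ ω, Matrix.trace ((Matrix.of fun i j : Fin N => b (Nat.dist i j) ω) ^ n) ∂μ ≤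
      #{f : Fin n → Fin N | IsPairing f ∧ IsBalanced f} +
        M ^ n * #{f : Fin n → Fin N | IsRepeating f ∧ ¬(IsPairing f ∧ IsBalanced f)} := by
  calc ∫ ω, Matrix.trace ((Matrix.of fun i j : Fin N => b (Nat.dist i j) ω) ^ n) ∂μ
      = ∫ ω, ∑ f : Fin n → Fin N, ∏ j, b (stepLength f j) ω ∂μ := by
        simp_rw [Matrix.trace_pow_eq_sum]
        rfl
    _ = ∑ f : Fin n → Fin N, ∫ ω, ∏ j, b (stepLength f j) ω ∂μ :=
        integral_finsetSum _ fun f _ => integrable_prod hmeas hzero hindep hintq f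
    _ ≤ ∑ f : Fin n → Fin N, ((if IsPairing f ∧ IsBalanced f then 1 else 0) +
          (if IsRepeating f ∧ ¬(IsPairing f ∧ IsBalanced f) then M ^ n else 0)) :=
        sum_le_sum fun f _ => integral_prod_le hmeas hzero hindep hid hmean hvar hM1 hM f
    _ = _ := by
        rw [sum_add_distrib, sum_boole, ← sum_filter, sum_const, nsmul_eq_mul]
        ring

theorem exists_integral_trace_pow_le [IsProbabilityMeasure μ] (hmeas : ∀ i, Measurable (b i))
    (hzero : b 0 = 0) (hindep : iIndepFun (fun i => b (i + 1)) μ)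
    (hid : ∀ i j, IdentDistrib (b (i + 1)) (b (j + 1)) μ μ)
    (hmean : ∀ i, ∫ ω, b (i + 1) ω ∂μ = 0) (hvar : ∀ i, ∫ ω, (b (i + 1) ω) ^ 2 ∂μ = 1)
    (hintq : ∀ i q : ℕ, Integrable (fun ω => (b (i + 1) ω) ^ q) μ) {k : ℕ} (hk : 1 ≤ k) :
    ∃ C : ℝ, ∀ N : ℕ, 1 ≤ N →
      ∫ ω, Matrix.trace ((Matrix.of fun i j : Fin N => b (Nat.dist i j) ω) ^ (2 * k)) ∂μ ≤
        (2 * k - 1)‼ * (N : ℝ) ^ (k + 1) + C * (N : ℝ) ^ k := by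
  have : NeZero (2 * k) := ⟨by omega⟩
  set M : ℝ := 1 + ∑ m ∈ range (2 * k + 1), |∫ ω, b 1 ω ^ m ∂μ|
  have hM1 : 1 ≤ M := le_add_of_nonneg_right (sum_nonneg fun _ _ => abs_nonneg _)
  have hM : ∀ m ≤ 2 * k, |∫ ω, b 1 ω ^ m ∂μ| ≤ M := fun m hm =>
    (single_le_sum (f := fun m => |∫ ω, b 1 ω ^ m ∂μ|) (fun _ _ => abs_nonneg _)
      (mem_range.mpr (by omega))).trans (le_add_of_nonneg_left zero_le_one)
  refine ⟨M ^ (2 * k) * ((2 * k) ^ (2 * k) * 2 ^ (2 * k) * 3 ^ (k - 1)), fun N hN => ?_⟩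
  have hpow : ((N * (2 * N + 1) ^ (k - 1) : ℕ) : ℝ) ≤ 3 ^ (k - 1) * (N : ℝ) ^ k := by
    have : (N : ℝ) ^ k = N * N ^ (k - 1) := by rw [← pow_succ', Nat.sub_add_cancel hk]
    rw [this, Nat.cast_mul, Nat.cast_pow, mul_left_comm, ← mul_pow]
    gcongr
    push_cast
    linarith [(Nat.one_le_cast (α := ℝ)).mpr hN]
  calc _ ≤ _ := integral_trace_pow_le hmeas hzero hindep hid hmean hvar hintq hM1 hM N
    _ ≤ (2 * k - 1)‼ * (N : ℝ) ^ (k + 1) +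
          M ^ (2 * k) * ((2 * k) ^ (2 * k) * 2 ^ (2 * k) * (N * (2 * N + 1) ^ (k - 1) : ℕ)) := by
        gcongr
        · exact_mod_cast (card_balanced_pairing_le rfl).trans_eq (by ring)
        · exact_mod_cast card_repeating_not_balanced_pairing_le rfl
    _ ≤ (2 * k - 1)‼ * (N : ℝ) ^ (k + 1) +
          M ^ (2 * k) * ((2 * k) ^ (2 * k) * 2 ^ (2 * k) * (3 ^ (k - 1) * (N : ℝ) ^ k)) := by
        gcongr
    _ = _ := by ring

end CyclicWalk

lemma Matrix.IsSymm.trace_pow_two_mul_nonneg {ι : Type*} [Fintype ι] [DecidableEq ι]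
    {A : Matrix ι ι ℝ} (hA : A.IsSymm) (k : ℕ) : 0 ≤ (A ^ (2 * k)).trace := by
  have h : (A ^ k).conjTranspose = A ^ k := by
    rw [Matrix.conjTranspose_pow, Matrix.conjTranspose_eq_transpose_of_trivial, hA.eq]
  have := (Matrix.posSemidef_conjTranspose_mul_self (A ^ k)).trace_nonneg
  rwa [h, ← pow_add, ← two_mul] at this

open Filter in
lemma limsup_le_of_le_add_div {u : ℕ → ℝ} {a c : ℝ} (h0 : ∀ N, 0 ≤ u N)
    (h : ∀ N ≥ 1, u N ≤ a + c / N) : limsup u atTop ≤ a := by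
  have ht : Tendsto (fun N : ℕ => a + c / N) atTop (nhds a) := by
    simpa using tendsto_const_nhds.add (tendsto_const_div_atTop_nhds_zero_nat c)
  calc limsup u atTop ≤ limsup (fun N : ℕ => a + c / N) atTop :=
        limsup_le_limsup (eventually_atTop.mpr ⟨1, h⟩) (isCoboundedUnder_le_of_le atTop h0)
          ht.isBoundedUnder_le
    _ = a := ht.limsup_eq

open MeasureTheory ProbabilityTheory Filter

theorem even_moments_toeplitz_le_gaussian {Ω : Type*} [MeasurableSpace Ω]
    (μ : Measure Ω) [IsProbabilityMeasure μ]
    (b : ℕ → Ω → ℝ) (hmeas : ∀ i, Measurable (b i))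
    (hzero : b 0 = 0)
    (hindep : iIndepFun (fun i => b (i+1)) μ)
    (hid : ∀ i j, IdentDistrib (b (i+1)) (b (j+1)) μ μ)
    (hmean : ∀ i, ∫ ω, b (i+1) ω ∂μ = 0)
    (hvar : ∀ i, ∫ ω, (b (i+1) ω)^2 ∂μ = 1)
    (hintq : ∀ i q : ℕ, Integrable (fun ω => (b (i+1) ω)^q) μ)
    (k : ℕ) (hk : 1 ≤ k) :
    Filter.limsup (fun N : ℕ =>
      (∫ ω, Matrix.trace ((Matrix.of fun i j : Fin N =>
          b (Nat.dist (i : ℕ) (j : ℕ)) ω) ^ (2*k)) ∂μ) / (N:ℝ)^(k+1)) atTop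
      ≤ (Nat.doubleFactorial (2*k - 1) : ℝ) := by
  obtain ⟨C, hC⟩ :=
    CyclicWalk.exists_integral_trace_pow_le hmeas hzero hindep hid hmean hvar hintq hk
  have hsymm (N : ℕ) (ω : Ω) : (Matrix.of fun i j : Fin N => b (Nat.dist i j) ω).IsSymm :=
    Matrix.IsSymm.ext fun i j => by simp [Nat.dist_comm]
  refine limsup_le_of_le_add_div (c := C) (fun N => div_nonneg
    (integral_nonneg fun ω => (hsymm N ω).trace_pow_two_mul_nonneg k) (by positivity))
    fun N hN => ?_
  have hN' : (0 : ℝ) < N := by exact_mod_cast hN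
  rw [div_le_iff₀ (by positivity)]
  calc _ ≤ _ := hC N hN
    _ = _ := by field_simp; ring
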